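/- Fix an integer m ≥ 1, let d_m = diag(p^{−2m}, 1, 1, p^{2m}) ∈ GL₄(ℚ_p), and let H_m = d_m K_m d_m^{−1}. Then for x, y ∈ ℚ_p, the unipotent element u(x,y) lies in H_m if and only if x ∈ p^{−m}ℤ_p and y ∈ p^{−m}ℤ_p. -/
import Mathlib


/- STATEMENT 8: With d_m = diag(p^{−2m},1,1,p^{2m}) and H_m = d_m K_m d_m^{−1},
the unipotent element u(x,y) lies in H_m iff x ∈ p^{−m}ℤ_p and y ∈ p^{−m}ℤ_p. -/

noncomputable section

open Matrix

/-- The antidiagonal matrix `J₄` over `ℚ_p`. -/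
def J4 (p : ℕ) [Fact p.Prime] : Matrix (Fin 4) (Fin 4) ℚ_[p] :=
  !![0,0,0,1; 0,0,1,0; 0,1,0,0; 1,0,0,0]

/-- The unipotent element `u(x,y)`. -/
def uElt (p : ℕ) [Fact p.Prime] (x y : ℚ_[p]) : Matrix (Fin 4) (Fin 4) ℚ_[p] :=
  !![1, x, y, -(x*y); 0, 1, 0, -y; 0, 0, 1, -x; 0, 0, 0, 1]

/-- The diagonal element `d_m = diag(p^{−2m}, 1, 1, p^{2m})`. -/
def dElt (p : ℕ) [Fact p.Prime] (m : ℕ) : Matrix (Fin 4) (Fin 4) ℚ_[p] :=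
  Matrix.diagonal ![(p : ℚ_[p]) ^ (-(2 * m : ℤ)), 1, 1, (p : ℚ_[p]) ^ (2 * m : ℤ)]

set_option maxHeartbeats 1600000

private lemma uElt_symp (p : ℕ) [Fact p.Prime] (x y : ℚ_[p]) :
    (uElt p x y)ᵀ * J4 p * uElt p x y = J4 p := by
  ext i j
  fin_cases i <;> fin_cases j <;>
    simp [uElt, J4, Matrix.mul_apply, Matrix.transpose_apply, Fin.sum_univ_four,
      Matrix.vecHead, Matrix.vecTail] <;> ring

private lemma uElt_det (p : ℕ) [Fact p.Prime] (x y : ℚ_[p]) :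
    (uElt p x y).det = 1 := by
  simp [uElt, Matrix.det_succ_row_zero, Fin.sum_univ_succ]

private lemma conj_eq (p : ℕ) [Fact p.Prime] (m : ℕ) (x y : ℚ_[p]) :
    Matrix.diagonal ![(p : ℚ_[p]) ^ (-(2 * m : ℤ)), 1, 1, (p : ℚ_[p]) ^ (2 * m : ℤ)] *
      uElt p ((p : ℚ_[p]) ^ (2 * m : ℤ) * x) ((p : ℚ_[p]) ^ (2 * m : ℤ) * y) *
      Matrix.diagonal ![(p : ℚ_[p]) ^ (2 * m : ℤ), 1, 1, (p : ℚ_[p]) ^ (-(2 * m : ℤ))] =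
      uElt p x y := by
  have hp : (p : ℚ_[p]) ≠ 0 := Nat.cast_ne_zero.mpr (Fact.out (p := p.Prime)).ne_zero
  have hA : (p : ℚ_[p]) ^ (2 * m : ℤ) ≠ 0 := zpow_ne_zero _ hp
  ext i j
  fin_cases i <;> fin_cases j <;>
    · simp [Matrix.mul_diagonal, Matrix.diagonal_mul, uElt, Matrix.vecHead, Matrix.vecTail,
        Function.comp]
      try field_simp
      try ring

private lemma d_mul_dI (p : ℕ) [Fact p.Prime] (m : ℕ) :
    dElt p m *
      Matrix.diagonal ![(p : ℚ_[p]) ^ (2 * m : ℤ), 1, 1, (p : ℚ_[p]) ^ (-(2 * m : ℤ))] = 1 := by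
  have hp : (p : ℚ_[p]) ≠ 0 := Nat.cast_ne_zero.mpr (Fact.out (p := p.Prime)).ne_zero
  have hA : (p : ℚ_[p]) ^ (2 * m : ℤ) ≠ 0 := zpow_ne_zero _ hp
  rw [dElt, Matrix.diagonal_mul_diagonal, ← Matrix.diagonal_one,
    Matrix.diagonal_eq_diagonal_iff]
  intro i
  fin_cases i <;> · simp [Matrix.vecHead, Matrix.vecTail]; try field_simp

private lemma dI_mul_d (p : ℕ) [Fact p.Prime] (m : ℕ) :
    Matrix.diagonal ![(p : ℚ_[p]) ^ (2 * m : ℤ), 1, 1, (p : ℚ_[p]) ^ (-(2 * m : ℤ))] *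
      dElt p m = 1 := by
  have hp : (p : ℚ_[p]) ≠ 0 := Nat.cast_ne_zero.mpr (Fact.out (p := p.Prime)).ne_zero
  have hA : (p : ℚ_[p]) ^ (2 * m : ℤ) ≠ 0 := zpow_ne_zero _ hp
  rw [dElt, Matrix.diagonal_mul_diagonal, ← Matrix.diagonal_one,
    Matrix.diagonal_eq_diagonal_iff]
  intro i
  fin_cases i <;> · simp [Matrix.vecHead, Matrix.vecTail]; try field_simp

theorem unipotent_in_Hm_iff
    (p : ℕ) [Fact p.Prime] (m : ℕ) (hm : 1 ≤ m) (x y : ℚ_[p]) :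
    (∃ k : Matrix (Fin 4) (Fin 4) ℚ_[p],
        kᵀ * J4 p * k = J4 p ∧ k.det = 1 ∧
        (∀ i j : Fin 4, ‖(k - 1) i j‖ ≤ (p : ℝ) ^ (-(m : ℤ))) ∧
        uElt p x y = dElt p m * k * (dElt p m)⁻¹) ↔
      ‖x‖ ≤ (p : ℝ) ^ (m : ℤ) ∧ ‖y‖ ≤ (p : ℝ) ^ (m : ℤ) := by
  have hp : (p : ℚ_[p]) ≠ 0 := Nat.cast_ne_zero.mpr (Fact.out (p := p.Prime)).ne_zero
  have hpR : (1:ℝ) < (p:ℝ) := by exact_mod_cast (Fact.out (p := p.Prime)).one_lt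
  have hnc : ‖(p : ℚ_[p]) ^ (2 * m : ℤ)‖ = (p:ℝ) ^ (-(2 * m : ℤ)) :=
    Padic.norm_p_zpow (2 * m : ℤ)
  have hinv : (dElt p m)⁻¹ =
      Matrix.diagonal ![(p : ℚ_[p]) ^ (2 * m : ℤ), 1, 1, (p : ℚ_[p]) ^ (-(2 * m : ℤ))] :=
    Matrix.inv_eq_right_inv (d_mul_dI p m)
  constructor
  · rintro ⟨k, _, _, h3, h4⟩
    have h4' : uElt p x y * dElt p m = dElt p m * k := by
      rw [h4, hinv, Matrix.mul_assoc, Matrix.mul_assoc, dI_mul_d p m, Matrix.mul_one]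
    have hx : x = (p : ℚ_[p]) ^ (-(2 * m : ℤ)) * k 0 1 := by
      have := congrFun (congrFun h4' 0) 1
      simpa [uElt, dElt, Matrix.mul_apply, Fin.sum_univ_four, Matrix.diagonal,
        Matrix.vecHead, Matrix.vecTail, _root_.zpow_neg] using this
    have hy : y = (p : ℚ_[p]) ^ (-(2 * m : ℤ)) * k 0 2 := by
      have := congrFun (congrFun h4' 0) 2
      simpa [uElt, dElt, Matrix.mul_apply, Fin.sum_univ_four, Matrix.diagonal,
        Matrix.vecHead, Matrix.vecTail, _root_.zpow_neg] using this
    have key : ∀ z : ℚ_[p], ∀ i j : Fin 4,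
        z = (p : ℚ_[p]) ^ (-(2 * m : ℤ)) * k i j → (i : ℕ) ≠ (j : ℕ) →
        ‖z‖ ≤ (p : ℝ) ^ (m : ℤ) := by
      intro z i j hz hij
      have hk : ‖k i j‖ ≤ (p : ℝ) ^ (-(m : ℤ)) := by
        have := h3 i j
        simpa [Matrix.sub_apply, Matrix.one_apply, Fin.ext_iff, hij] using this
      rw [hz, norm_mul]
      have hnp : ‖(p : ℚ_[p]) ^ (-(2 * m : ℤ))‖ = (p:ℝ) ^ (2 * m : ℤ) := by
        rw [Padic.norm_p_zpow, neg_neg]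
      rw [hnp]
      calc (p:ℝ) ^ (2 * m : ℤ) * ‖k i j‖ ≤ (p:ℝ) ^ (2 * m : ℤ) * (p:ℝ) ^ (-(m : ℤ)) := by
            gcongr
            try positivity
        _ = (p:ℝ) ^ (m : ℤ) := by
            rw [← zpow_add₀ (by positivity : (p:ℝ) ≠ 0)]
            congr 1
            omega
    exact ⟨key x 0 1 hx (by norm_num), key y 0 2 hy (by norm_num)⟩
  · rintro ⟨hx, hy⟩
    set c : ℚ_[p] := (p : ℚ_[p]) ^ (2 * m : ℤ) with hc
    refine ⟨uElt p (c * x) (c * y), uElt_symp p _ _, uElt_det p _ _, ?_, ?_⟩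
    · have hb : ∀ z : ℚ_[p], ‖z‖ ≤ (p : ℝ) ^ (m : ℤ) → ‖c * z‖ ≤ (p : ℝ) ^ (-(m : ℤ)) := by
        intro z hz
        rw [norm_mul, hnc]
        calc (p:ℝ) ^ (-(2 * m : ℤ)) * ‖z‖ ≤ (p:ℝ) ^ (-(2 * m : ℤ)) * (p:ℝ) ^ (m : ℤ) := by
              gcongr
              try positivity
          _ = (p:ℝ) ^ (-(m : ℤ)) := by
              rw [← zpow_add₀ (by positivity : (p:ℝ) ≠ 0)]
              congr 1
              omega
      have hb2 : ‖c * x * (c * y)‖ ≤ (p : ℝ) ^ (-(m : ℤ)) := by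
        rw [norm_mul]
        calc ‖c * x‖ * ‖c * y‖ ≤ (p : ℝ) ^ (-(m : ℤ)) * 1 := by
              refine mul_le_mul (hb x hx) ((hb y hy).trans ?_) (norm_nonneg _) ?_
              · apply zpow_le_one_of_nonpos₀ hpR.le
                omega
              · positivity
          _ = (p : ℝ) ^ (-(m : ℤ)) := mul_one _
      intro i j
      have hpos : (0:ℝ) ≤ (p : ℝ) ^ (-(m : ℤ)) := by positivity
      fin_cases i <;> fin_cases j <;>
        first
        | simpa [uElt, Matrix.sub_apply, Matrix.one_apply, Matrix.vecHead,
            Matrix.vecTail] using hb x hx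
        | simpa [uElt, Matrix.sub_apply, Matrix.one_apply, Matrix.vecHead,
            Matrix.vecTail] using hb y hy
        | simpa [uElt, Matrix.sub_apply, Matrix.one_apply, Matrix.vecHead,
            Matrix.vecTail, mul_assoc, mul_comm, mul_left_comm] using hb2
        | (simp [uElt, Matrix.sub_apply, Matrix.one_apply, Matrix.vecHead, Matrix.vecTail]
           try positivity)
    · rw [hinv, hc, dElt]
      exact (conj_eq p m x y).symm

end
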